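/- For nonnegative integers n, r, the graph G = K_{n+r+2} + ((2r+3)K_1 ∪ K_2) is (n+r+2)-connected, has toughness t(G) = (n+r+2)/(2(r+2)), and is not (P_{≥3},n)-factor critical avoidable. -/

import Mathlib

open SimpleGraph

/-- Number of isolated vertices of a graph. -/
noncomputable def isolCount {V : Type*} (G : SimpleGraph V) : ℕ :=
  Nat.card {v : V // ∀ w, ¬ G.Adj v w}

/-- Number of connected components of a graph. -/
noncomputable def compCount {V : Type*} (G : SimpleGraph V) : ℕ :=
  Nat.card G.ConnectedComponent

/-- Number of vertices of degree exactly one. -/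
noncomputable def deg1Count {V : Type*} (G : SimpleGraph V) : ℕ :=
  Nat.card {v : V // Nat.card {w : V // G.Adj v w} = 1}

/-- A graph is factor-critical if deleting any vertex leaves a graph with a perfect matching. -/
def IsFactorCritical {V : Type*} (G : SimpleGraph V) : Prop :=
  ∀ v : V, ∃ M : (G.induce ({v}ᶜ : Set V)).Subgraph, M.IsPerfectMatching

/-- `G` is the corona of the factor-critical graph induced on `S` (with `3 ≤ |S|`):
every vertex outside `S` is a pendant vertex attached to its own vertex of `S`. -/
def IsCoronaOfFactorCritical {V : Type*} (G : SimpleGraph V) (S : Set V) : Prop :=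
  3 ≤ Nat.card S ∧ IsFactorCritical (G.induce S) ∧
  ∃ z : S ≃ ↥(Sᶜ), ∀ (y : S) (w : V), G.Adj ((z y : ↥(Sᶜ)) : V) w ↔ w = (y : V)

/-- A sun is `K₁`, `K₂`, or the corona of a factor-critical graph with at least 3 vertices. -/
def IsSunGraph {V : Type*} (G : SimpleGraph V) : Prop :=
  Nat.card V = 1 ∨ (Nat.card V = 2 ∧ G.Connected) ∨ ∃ S : Set V, IsCoronaOfFactorCritical G S

/-- The number of sun components of a graph. -/
noncomputable def sunCount {V : Type*} (G : SimpleGraph V) : ℕ :=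
  Nat.card {C : G.ConnectedComponent // IsSunGraph (G.induce C.supp)}

/-- `G` has a `P_{≥k}`-factor: a spanning subgraph all of whose components are paths
of order at least `k`. -/
def HasPathFactor {V : Type*} (G : SimpleGraph V) (k : ℕ) : Prop :=
  ∃ F : SimpleGraph V, F ≤ G ∧ ∀ C : F.ConnectedComponent,
    ∃ m : ℕ, k ≤ m ∧ Nonempty ((F.induce C.supp) ≃g pathGraph m)

/-- Vertex `k`-connectivity: more than `k` vertices, and removing fewer than `k`
vertices leaves a connected graph. -/
def IsKConnected {V : Type*} (G : SimpleGraph V) (k : ℕ) : Prop :=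
  k < Nat.card V ∧ ∀ S : Set V, Nat.card S < k → (G.induce (Sᶜ : Set V)).Connected

/-- The toughness of a graph, valued in `ℝ≥0∞` (infimum over the empty set is `∞`,
which covers complete graphs). -/
noncomputable def toughness {V : Type*} (G : SimpleGraph V) : ENNReal :=
  ⨅ X : {X : Set V // 2 ≤ compCount (G.induce (Xᶜ : Set V))},
    (Nat.card X.1 : ENNReal) / (compCount (G.induce ((X.1)ᶜ : Set V)) : ENNReal)

/-- The isolated toughness of a graph, valued in `ℝ≥0∞`. -/
noncomputable def isolatedToughness {V : Type*} (G : SimpleGraph V) : ENNReal :=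
  ⨅ X : {X : Set V // 2 ≤ isolCount (G.induce (Xᶜ : Set V))},
    (Nat.card X.1 : ENNReal) / (isolCount (G.induce ((X.1)ᶜ : Set V)) : ENNReal)

/-- `G` is `(P_{≥k}, n)`-factor critical avoidable: for every vertex set `W` of size `n`
and every edge `e` of `G − W`, the graph `G − W − e` has a `P_{≥k}`-factor. -/
def PathFactorCriticalAvoidable {V : Type*} (G : SimpleGraph V) (k n : ℕ) : Prop :=
  ∀ W : Set V, Nat.card W = n → ∀ e ∈ (G.induce (Wᶜ : Set V)).edgeSet,
    HasPathFactor ((G.induce (Wᶜ : Set V)).deleteEdges {e}) k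

/-- The join of two graphs: all edges between the two sides. -/
def graphJoin {α β : Type*} (G : SimpleGraph α) (H : SimpleGraph β) :
    SimpleGraph (α ⊕ β) where
  Adj x y :=
    match x, y with
    | Sum.inl a, Sum.inl b => G.Adj a b
    | Sum.inr a, Sum.inr b => H.Adj a b
    | _, _ => True
  symm := ⟨by rintro (a|a) (b|b) h <;> simp_all <;> exact h.symm⟩
  loopless := ⟨by rintro (a|a) h <;> simp_all⟩

/-- The disjoint union of two graphs. -/
def disjUnion {α β : Type*} (G : SimpleGraph α) (H : SimpleGraph β) :
    SimpleGraph (α ⊕ β) where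
  Adj x y :=
    match x, y with
    | Sum.inl a, Sum.inl b => G.Adj a b
    | Sum.inr a, Sum.inr b => H.Adj a b
    | _, _ => False
  symm := ⟨by rintro (a|a) (b|b) h <;> simp_all <;> exact h.symm⟩
  loopless := ⟨by rintro (a|a) h <;> simp_all⟩

/-- `b` disjoint copies of `K₂`. -/
def copiesK2 (b : ℕ) : SimpleGraph (Fin b × Fin 2) where
  Adj x y := x.1 = y.1 ∧ x.2 ≠ y.2
  symm := ⟨by rintro x y ⟨h1, h2⟩; exact ⟨h1.symm, h2.symm⟩⟩
  loopless := ⟨by rintro x ⟨h1, h2⟩; exact h2 rfl⟩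

/-!
Every vertex of the clique `K_{n+r+2}` is universal, so a disconnecting set contains the whole
clique. This gives the connectivity, and also the toughness: deleting the clique leaves the
`2r+3` isolated vertices and the `K₂`, i.e. `2r+4` components, and no disconnecting set
leaves more.

For the last claim delete `n` clique vertices and the edge of `K₂`. The remaining `3r+7` vertices
contain the independent set of the `2r+5` vertices outside the clique. In a path of order `m ≥ 3`
an independent set has at most `⌈m/2⌉ ≤ 2m/3` vertices, so a `P_{≥3}`-factor forces an
independent set to have at most two thirds of all vertices, and `3(2r+5) > 2(3r+7)`.
-/

namespace SimpleGraph

variable {V : Type*} {G : SimpleGraph V}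

theorem Reachable.eq_of_forall_not_adj {u v : V} (h : G.Reachable u v) (hu : ∀ w, ¬ G.Adj u w) :
    u = v := by
  obtain ⟨p⟩ := h
  cases p with
  | nil => rfl
  | cons hadj _ => exact (hu _ hadj).elim

theorem connected_induce_of_forall_adj {s : Set V} {u : V} (hu : u ∈ s)
    (h : ∀ v ∈ s, v ≠ u → G.Adj u v) : (G.induce s).Connected := by
  refine (connected_iff_exists_forall_reachable _).2 ⟨⟨u, hu⟩, fun w => ?_⟩
  by_cases hw : w = ⟨u, hu⟩
  · exact hw ▸ Reachable.refl _
  · exact Adj.reachable (h w w.2 fun h' => hw (Subtype.ext h'))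

theorem pathGraph_two_mul_ncard_le_of_isIndepSet {m : ℕ} {s : Set (Fin m)}
    (hs : (pathGraph m).IsIndepSet s) : 2 * s.ncard ≤ m + 1 := by
  -- two consecutive vertices of the path are adjacent, so `i ↦ i / 2` is injective on `s`
  have hinj : Set.InjOn (fun i : Fin m => (i : ℕ) / 2) s := by
    intro i hi j hj hij
    by_contra hne
    have : (i : ℕ) + 1 = j ∨ (j : ℕ) + 1 = i := by
      have : (i : ℕ) ≠ j := Fin.val_ne_of_ne hne
      simp only at hij
      omega
    exact hs hi hj hne (pathGraph_adj.2 this)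
  have hmaps : ∀ i ∈ s, (i : ℕ) / 2 ∈ Set.Iio ((m + 1) / 2) := fun i _ => by
    have := i.isLt
    simp only [Set.mem_Iio]
    omega
  have := Set.ncard_le_ncard_of_injOn _ hmaps hinj
  rw [Set.ncard_Iio_nat] at this
  omega

theorem Iso.two_mul_ncard_le_of_isIndepSet_of_pathGraph {m : ℕ} (φ : G ≃g pathGraph m)
    {s : Set V} (hs : G.IsIndepSet s) : 2 * s.ncard ≤ m + 1 := by
  have himage : (pathGraph m).IsIndepSet (φ '' s) := by
    rintro _ ⟨u, hu, rfl⟩ _ ⟨v, hv, rfl⟩ hne hadj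
    exact hs hu hv (ne_of_apply_ne φ hne) (φ.map_adj_iff.1 hadj)
  rw [← Set.ncard_image_of_injective s φ.injective]
  exact pathGraph_two_mul_ncard_le_of_isIndepSet himage

theorem three_mul_ncard_inter_supp_le {I : Set V} (hI : G.IsIndepSet I) (C : G.ConnectedComponent)
    {m : ℕ} (hm : 3 ≤ m) (φ : G.induce C.supp ≃g pathGraph m) :
    3 * (I ∩ C.supp).ncard ≤ 2 * C.supp.ncard := by
  have hindep : (G.induce C.supp).IsIndepSet (Subtype.val ⁻¹' I) :=
    fun u hu v hv hne hadj => hI hu hv (Subtype.val_injective.ne hne) hadj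
  have hI_card : (Subtype.val ⁻¹' I : Set C.supp).ncard = (I ∩ C.supp).ncard := by
    rw [← Set.ncard_image_of_injective _ Subtype.val_injective, Subtype.image_preimage_coe,
      Set.inter_comm]
  have hC_card : C.supp.ncard = m := by
    rw [← Nat.card_coe_set_eq, Nat.card_congr φ.toEquiv, Nat.card_fin]
  have := φ.two_mul_ncard_le_of_isIndepSet_of_pathGraph hindep
  omega

theorem ncard_eq_sum_ncard_inter_supp [Fintype V] [Fintype G.ConnectedComponent] (s : Set V) :
    s.ncard = ∑ C : G.ConnectedComponent, (s ∩ C.supp).ncard := by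
  classical
  rw [Set.ncard_eq_toFinset_card' s, Finset.card_eq_sum_card_fiberwise
    (f := G.connectedComponentMk) (t := Finset.univ) fun _ _ => Finset.mem_univ _]
  refine Finset.sum_congr rfl fun C _ => ?_
  rw [Set.ncard_eq_toFinset_card']
  congr 1
  ext v
  simp [ConnectedComponent.mem_supp_iff]

end SimpleGraph

section Counting

variable {V : Type*} {G : SimpleGraph V}

theorem compCount_eq_one_of_connected (h : G.Connected) : compCount G = 1 :=
  Nat.card_eq_one_iff_unique.2
    ⟨h.preconnected.subsingleton_connectedComponent, ⟨G.connectedComponentMk h.nonempty.some⟩⟩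

theorem compCount_le_card [Finite V] (G : SimpleGraph V) : compCount G ≤ Nat.card V :=
  Nat.card_le_card_of_surjective G.connectedComponentMk fun C => C.exists_rep

theorem compCount_lt_card_of_adj [Finite V] {u v : V} (h : G.Adj u v) :
    compCount G < Nat.card V := by
  cases nonempty_fintype V
  cases nonempty_fintype G.ConnectedComponent
  rw [compCount, Nat.card_eq_fintype_card, Nat.card_eq_fintype_card]
  refine Fintype.card_lt_of_surjective_not_injective _ (fun C => C.exists_rep) fun hinj => ?_
  exact h.ne (hinj (ConnectedComponent.eq.2 h.reachable))

theorem card_le_compCount_of_pairwise_not_reachable [Finite V] {ι : Type*} (f : ι → V)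
    (hf : Pairwise fun i j => ¬ G.Reachable (f i) (f j)) : Nat.card ι ≤ compCount G :=
  Nat.card_le_card_of_injective (G.connectedComponentMk ∘ f) fun i j hij => by
    by_contra hne
    exact hf hne (ConnectedComponent.eq.1 hij)

theorem HasPathFactor.three_mul_ncard_le [Finite V] (h : HasPathFactor G 3) {I : Set V}
    (hI : G.IsIndepSet I) : 3 * I.ncard ≤ 2 * Nat.card V := by
  classical
  cases nonempty_fintype V
  obtain ⟨F, hFG, hpath⟩ := h
  have hIF : F.IsIndepSet I := fun u hu v hv hne hadj => hI hu hv hne (hFG hadj)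
  calc 3 * I.ncard = ∑ C : F.ConnectedComponent, 3 * (I ∩ C.supp).ncard := by
        rw [ncard_eq_sum_ncard_inter_supp (G := F), Finset.mul_sum]
    _ ≤ ∑ C : F.ConnectedComponent, 2 * C.supp.ncard := Finset.sum_le_sum fun C _ => by
        obtain ⟨m, hm, ⟨φ⟩⟩ := hpath C
        exact three_mul_ncard_inter_supp_le hIF C hm φ
    _ = 2 * Nat.card V := by
        rw [← Finset.mul_sum, ← Set.ncard_univ, ncard_eq_sum_ncard_inter_supp (G := F)]
        simp

end Counting

section Join

variable {α β : Type*}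

@[simp] theorem graphJoin_adj_inr_inr {G : SimpleGraph α} {H : SimpleGraph β} {a b : β} :
    (graphJoin G H).Adj (.inr a) (.inr b) ↔ H.Adj a b := Iff.rfl

@[simp] theorem disjUnion_adj_inl_inl {G : SimpleGraph α} {H : SimpleGraph β} {a b : α} :
    (disjUnion G H).Adj (.inl a) (.inl b) ↔ G.Adj a b := Iff.rfl

@[simp] theorem disjUnion_adj_inr_inr {G : SimpleGraph α} {H : SimpleGraph β} {a b : β} :
    (disjUnion G H).Adj (.inr a) (.inr b) ↔ H.Adj a b := Iff.rfl

@[simp] theorem disjUnion_not_adj_inl_inr {G : SimpleGraph α} {H : SimpleGraph β} {a : α}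
    {b : β} : ¬ (disjUnion G H).Adj (.inl a) (.inr b) := id

@[simp] theorem disjUnion_not_adj_inr_inl {G : SimpleGraph α} {H : SimpleGraph β} {a : α}
    {b : β} : ¬ (disjUnion G H).Adj (.inr b) (.inl a) := id

theorem graphJoin_top_adj_inl {H : SimpleGraph β} {a : α} {v : α ⊕ β} (hv : v ≠ .inl a) :
    (graphJoin ⊤ H).Adj (.inl a) v := by
  cases v with
  | inl b => exact fun hab => hv (congrArg _ hab.symm)
  | inr b => trivial

theorem connected_graphJoin_top_induce_compl (H : SimpleGraph β) {S : Set (α ⊕ β)} {a : α}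
    (ha : .inl a ∉ S) : ((graphJoin ⊤ H).induce Sᶜ).Connected :=
  connected_induce_of_forall_adj ha fun _ _ hv => graphJoin_top_adj_inl hv

theorem range_inl_subset_of_not_connected {H : SimpleGraph β} {S : Set (α ⊕ β)}
    (h : ¬ ((graphJoin ⊤ H).induce Sᶜ).Connected) : Set.range .inl ⊆ S := by
  rintro _ ⟨a, rfl⟩
  by_contra ha
  exact h (connected_graphJoin_top_induce_compl H ha)

theorem ncard_range_inl [Finite α] :
    (Set.range (.inl : α → α ⊕ β)).ncard = Nat.card α :=
  Set.ncard_range_of_injective Sum.inl_injective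

theorem isKConnected_graphJoin_top [Finite α] [Finite β] [Nonempty β] (H : SimpleGraph β) :
    IsKConnected (graphJoin (⊤ : SimpleGraph α) H) (Nat.card α) := by
  refine ⟨by rw [Nat.card_sum]; have := Nat.card_pos (α := β); omega, fun S hS => ?_⟩
  by_contra hconn
  have := Set.ncard_le_ncard (range_inl_subset_of_not_connected hconn)
  rw [ncard_range_inl, ← Nat.card_coe_set_eq] at this
  omega

end Join

/-- The graph `K_{|α|} + (|γ| K₁ ∪ K₂)`. -/
abbrev completeJoinIsolatedK₂ (α γ : Type*) : SimpleGraph (α ⊕ (γ ⊕ Fin 2)) :=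
  graphJoin ⊤ (disjUnion ⊥ ⊤)

namespace completeJoinIsolatedK₂

variable {α γ : Type*}

local notation "𝒢" => completeJoinIsolatedK₂ α γ

theorem mem_range_inl_of_adj_inr_inl {c : γ} {v : α ⊕ (γ ⊕ Fin 2)}
    (h : (𝒢).Adj (.inr (.inl c)) v) : v ∈ Set.range .inl := by
  rcases v with a | d | b
  · exact ⟨a, rfl⟩
  · simp at h
  · simp at h

theorem eq_of_adj_inr_inr {x y : γ ⊕ Fin 2} (h : (𝒢).Adj (.inr x) (.inr y)) :
    x = .inr 0 ∧ y = .inr 1 ∨ x = .inr 1 ∧ y = .inr 0 := by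
  rcases x with c | a <;> rcases y with d | b <;> simp at h
  fin_cases a <;> fin_cases b <;> simp_all

theorem card_add_one_le_compCount [Finite α] [Finite γ] :
    Nat.card γ + 1 ≤ compCount ((𝒢).induce (Set.range .inl)ᶜ) := by
  let f : Option γ → ↥(Set.range (Sum.inl : α → α ⊕ (γ ⊕ Fin 2)))ᶜ
    | none => ⟨.inr (.inr 0), by simp⟩
    | some c => ⟨.inr (.inl c), by simp⟩
  have hisolated : ∀ c x, ((𝒢).induce (Set.range .inl)ᶜ).Reachable (f (some c)) (f x) →
      some c = x := fun c x hreach => by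
    have := hreach.eq_of_forall_not_adj fun w hw => w.2 (mem_range_inl_of_adj_inr_inl hw)
    cases x <;> simp_all [f]
  rw [← Finite.card_option]
  refine card_le_compCount_of_pairwise_not_reachable f ?_
  rintro (_ | c) (_ | d) hne hreach
  · exact hne rfl
  · exact hne (hisolated d none hreach.symm).symm
  · exact hne (hisolated c none hreach)
  · exact hne (hisolated c (some d) hreach)

theorem compCount_le_card_add_one [Finite α] [Finite γ] {X : Set (α ⊕ (γ ⊕ Fin 2))}
    (hX : Set.range .inl ⊆ X) : compCount ((𝒢).induce Xᶜ) ≤ Nat.card γ + 1 := by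
  have htotal : X.ncard + Nat.card ↥Xᶜ = Nat.card α + (Nat.card γ + 2) := by
    rw [Nat.card_coe_set_eq, Set.ncard_add_ncard_compl, Nat.card_sum, Nat.card_sum, Nat.card_fin]
  have hL := Set.ncard_le_ncard hX
  rw [ncard_range_inl] at hL
  by_cases hK₂ : .inr (.inr 0) ∈ Xᶜ ∧ .inr (.inr 1) ∈ Xᶜ
  · -- the edge of `K₂` survives, so it merges two vertices into one component
    have hadj : ((𝒢).induce Xᶜ).Adj ⟨_, hK₂.1⟩ ⟨_, hK₂.2⟩ := by simp
    have := compCount_lt_card_of_adj hadj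
    omega
  · have hp : ∃ p ∈ X, p ∉ Set.range .inl := by
      simp only [Set.mem_compl_iff, not_and_or, not_not] at hK₂
      rcases hK₂ with h | h <;> exact ⟨_, h, by simp⟩
    obtain ⟨p, hpX, hpL⟩ := hp
    have := Set.ncard_le_ncard (Set.insert_subset hpX hX)
    rw [Set.ncard_insert_of_notMem hpL, ncard_range_inl] at this
    have := compCount_le_card ((𝒢).induce Xᶜ)
    omega

theorem toughness_eq [Finite α] [Finite γ] [Nonempty γ] :
    toughness 𝒢 = Nat.card α / (Nat.card γ + 1) := by
  have hL : compCount ((𝒢).induce (Set.range .inl)ᶜ) = Nat.card γ + 1 :=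
    le_antisymm (compCount_le_card_add_one subset_rfl) card_add_one_le_compCount
  apply le_antisymm
  · have h2 : 2 ≤ compCount ((𝒢).induce (Set.range .inl)ᶜ) := by
      rw [hL]
      have := Nat.card_pos (α := γ)
      omega
    refine (iInf_le _ ⟨_, h2⟩).trans_eq ?_
    rw [hL, Nat.card_coe_set_eq, ncard_range_inl]
    push_cast
    rfl
  · refine le_iInf fun ⟨X, hX⟩ => ?_
    have hLX : Set.range .inl ⊆ X := range_inl_subset_of_not_connected fun hconn => by
      rw [compCount_eq_one_of_connected hconn] at hX
      omega
    have hnum := Set.ncard_le_ncard hLX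
    rw [ncard_range_inl, ← Nat.card_coe_set_eq] at hnum
    exact ENNReal.div_le_div (by exact_mod_cast hnum)
      (by exact_mod_cast compCount_le_card_add_one hLX)

theorem not_pathFactorCriticalAvoidable [Finite α] [Finite γ] {n : ℕ} (hn : n ≤ Nat.card α)
    (hsmall : 2 * (Nat.card α - n) < Nat.card γ + 2) :
    ¬ PathFactorCriticalAvoidable 𝒢 3 n := by
  intro h
  obtain ⟨T, -, hT⟩ := Set.exists_subset_card_eq (n := n) (s := (Set.univ : Set α))
    (by rwa [Set.ncard_univ])
  set W : Set (α ⊕ (γ ⊕ Fin 2)) := .inl '' T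
  have hW : Nat.card W = n := by
    rw [Nat.card_coe_set_eq, Set.ncard_image_of_injective _ Sum.inl_injective, hT]
  have hmem : ∀ x, .inr x ∈ Wᶜ := by simp [W]
  let p : Fin 2 → ↥Wᶜ := fun i => ⟨.inr (.inr i), hmem _⟩
  have he : s(p 0, p 1) ∈ ((𝒢).induce Wᶜ).edgeSet := by simp [p]
  have hI : (((𝒢).induce Wᶜ).deleteEdges {s(p 0, p 1)}).IsIndepSet
      (Subtype.val ⁻¹' Set.range .inr) := by
    rintro u ⟨x, hx⟩ v ⟨y, hy⟩ - huv
    obtain ⟨hadj, hne⟩ := deleteEdges_adj.1 huv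
    have hadj' : (𝒢).Adj (.inr x) (.inr y) := by rw [hx, hy]; exact hadj
    refine hne (Set.mem_singleton_iff.2 ?_)
    rcases eq_of_adj_inr_inr hadj' with ⟨rfl, rfl⟩ | ⟨rfl, rfl⟩
    · rw [show u = p 0 from Subtype.ext hx.symm, show v = p 1 from Subtype.ext hy.symm]
    · rw [show u = p 1 from Subtype.ext hx.symm, show v = p 0 from Subtype.ext hy.symm,
        Sym2.eq_swap]
  have hIcard : (Subtype.val ⁻¹' Set.range .inr : Set ↥Wᶜ).ncard = Nat.card γ + 2 := by
    have hsub : Set.range .inr ⊆ Set.range (Subtype.val : ↥Wᶜ → _) := by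
      rintro _ ⟨x, rfl⟩
      exact ⟨⟨_, hmem x⟩, rfl⟩
    rw [Set.ncard_preimage_of_injective_subset_range Subtype.val_injective hsub,
      Set.ncard_range_of_injective Sum.inr_injective, Nat.card_sum, Nat.card_fin]
  have hVcard : n + Nat.card ↥Wᶜ = Nat.card α + (Nat.card γ + 2) := by
    rw [← hW, Nat.card_coe_set_eq, Nat.card_coe_set_eq, Set.ncard_add_ncard_compl, Nat.card_sum,
      Nat.card_sum, Nat.card_fin]
  have := (h W hW _ he).three_mul_ncard_le hI
  omega

end completeJoinIsolatedK₂

/-- Remark 3: sharpness of the toughness bound in Theorem 7. -/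
theorem stmt8 (n r : ℕ)
    (G : SimpleGraph (Fin (n + r + 2) ⊕ (Fin (2 * r + 3) ⊕ Fin 2)))
    (hG : G = graphJoin (⊤ : SimpleGraph (Fin (n + r + 2)))
      (disjUnion (⊥ : SimpleGraph (Fin (2 * r + 3))) (⊤ : SimpleGraph (Fin 2)))) :
    IsKConnected G (n + r + 2) ∧
    toughness G = ((n : ENNReal) + r + 2) / (2 * ((r : ENNReal) + 2)) ∧
    ¬ PathFactorCriticalAvoidable G 3 n := by
  subst hG
  refine ⟨?_, ?_, ?_⟩
  · simpa using isKConnected_graphJoin_top (α := Fin (n + r + 2))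
      (disjUnion (⊥ : SimpleGraph (Fin (2 * r + 3))) (⊤ : SimpleGraph (Fin 2)))
  · refine (completeJoinIsolatedK₂.toughness_eq (α := Fin (n + r + 2))
      (γ := Fin (2 * r + 3))).trans ?_
    simp only [Nat.card_fin]
    push_cast
    ring_nf
  · exact completeJoinIsolatedK₂.not_pathFactorCriticalAvoidable
      (by simp only [Nat.card_fin]; omega) (by simp only [Nat.card_fin]; omega)
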